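/- Finite-n sandwich bound for a general prior on n-sources: Let n ≥ 1, ν ∈ R_n, let w : R_n → [0,1] satisfy Σ_{q∈R_n} w(q) = 1, and set S_n = {q ∈ R_n : w(q) > 0}. For C ⊆ P(X) define λ_n(C‖ν) = sup_{q ∈ C∩S_n} [L(q‖ν) + (1/n)·log w(q)], and define the posterior π^w_n(Q|ν) = (Σ_{q∈Q∩R_n} w(q)·Π_x q(x)^{n·ν(x)}) / (Σ_{q∈R_n} w(q)·Π_x q(x)^{n·ν(x)}). If Q∩S_n ≠ ∅ and λ_n(P(X)‖ν) > −∞, then λ_n(Q‖ν) − λ_n(P(X)‖ν) − (m/n)·log(n+1) ≤ (1/n)·log π^w_n(Q|ν) ≤ λ_n(Q‖ν) − λ_n(P(X)‖ν) + (m/n)·log(n+1), in ℝ ∪ {−∞}. -/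

import Mathlib

open scoped BigOperators Classical
open Filter Topology

noncomputable section

def pmfSet (X : Type*) [Fintype X] : Set (X → ℝ) :=
  {p | (∀ x, 0 ≤ p x) ∧ ∑ x, p x = 1}

def Rn (X : Type*) [Fintype X] (n : ℕ) : Set (X → ℝ) :=
  {q | q ∈ pmfSet X ∧ ∀ x, ∃ k : ℕ, q x = (k : ℝ) / (n : ℝ)}

def ratPMF (X : Type*) [Fintype X] : Set (X → ℝ) :=
  {q | q ∈ pmfSet X ∧ ∀ x, ∃ r : ℚ, q x = (r : ℝ)}

def Ldiv {X : Type*} [Fintype X] (q p : X → ℝ) : EReal :=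
  ∑ x, if p x = 0 then (0 : EReal)
    else if q x = 0 then (⊥ : EReal)
    else (↑(p x * Real.log (q x)) : EReal)

def LSup {X : Type*} [Fintype X] (Q : Set (X → ℝ)) (p : X → ℝ) : EReal :=
  ⨆ q ∈ Q, Ldiv q p

def Idiv {X : Type*} [Fintype X] (p q : X → ℝ) : EReal :=
  ∑ x, if p x = 0 then (0 : EReal)
    else if q x = 0 then (⊤ : EReal)
    else (↑(p x * Real.log (p x / q x)) : EReal)

def typeProb {X : Type*} [Fintype X] (n : ℕ) (ν q : X → ℝ) : ℝ :=
  ∏ x, q x ^ ((n : ℝ) * ν x)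

def post {X : Type*} [Fintype X] (n : ℕ) (ν : X → ℝ) (Q : Set (X → ℝ)) : ℝ :=
  (∑' q : ↥(Q ∩ Rn X n), typeProb n ν ↑q) / (∑' q : ↥(Rn X n), typeProb n ν ↑q)

def postGen {X : Type*} [Fintype X] (w : (X → ℝ) → ℝ) (n : ℕ) (ν : X → ℝ)
    (Q : Set (X → ℝ)) : ℝ :=
  (∑' q : ↥(Q ∩ Rn X n), w ↑q * typeProb n ν ↑q) /
  (∑' q : ↥(Rn X n), w ↑q * typeProb n ν ↑q)

def tv {X : Type*} [Fintype X] (p q : X → ℝ) : ℝ := (1 / 2) * ∑ x, |p x - q x|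

def tvBall {X : Type*} [Fintype X] (q : X → ℝ) (ε : ℝ) : Set (X → ℝ) :=
  {p | p ∈ pmfSet X ∧ tv p q ≤ ε}

def elog (x : ℝ) : EReal := if x ≤ 0 then (⊥ : EReal) else (↑(Real.log x) : EReal)

def linFam {X : Type*} [Fintype X] {k : ℕ} (u : Fin k → X → ℝ) (a : Fin k → ℝ) :
    Set (X → ℝ) :=
  {q | q ∈ pmfSet X ∧ ∀ j, ∑ x, q x * u j x = a j}

def lambdaN {X : Type*} [Fintype X] (w : (X → ℝ) → ℝ) (n : ℕ) (ν : X → ℝ)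
    (C : Set (X → ℝ)) : EReal :=
  ⨆ q ∈ C ∩ {q | q ∈ Rn X n ∧ 0 < w q},
    (Ldiv q ν + (↑((1 : ℝ) / n * Real.log (w q)) : EReal))

def priorN {X : Type*} [Fintype X] (c : ℕ → (X → ℝ) → (X → ℝ)) (pr : (X → ℝ) → ℝ)
    (n : ℕ) (qn : X → ℝ) : ℝ :=
  ∑' q : ↥{q | q ∈ ratPMF X ∧ c n q = qn}, pr ↑q

section AuxSandwich

lemma elog_of_pos' {x : ℝ} (hx : 0 < x) : elog x = (Real.log x : EReal) := by
  simp [elog, not_le.2 hx]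

lemma elog_zero'' : elog 0 = ⊥ := by simp [elog]

lemma ecoe_sum' {α : Type*} (s : Finset α) (f : α → ℝ) :
    ((∑ i ∈ s, f i : ℝ) : EReal) = ∑ i ∈ s, ((f i : ℝ) : EReal) := by
  classical
  induction s using Finset.cons_induction with
  | empty => simp
  | cons a s ha ih => rw [Finset.sum_cons, Finset.sum_cons, EReal.coe_add, ih]

variable {X : Type*} [Fintype X]

lemma pmf_le_one' {q : X → ℝ} (hq : q ∈ pmfSet X) (x : X) : q x ≤ 1 := by
  have h := Finset.single_le_sum (f := q) (fun y _ => hq.1 y) (Finset.mem_univ x)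
  rw [hq.2] at h; exact h

lemma typeProb_nonneg' (n : ℕ) (ν q : X → ℝ) (hq : ∀ x, 0 ≤ q x) :
    0 ≤ typeProb n ν q :=
  Finset.prod_nonneg fun x _ => Real.rpow_nonneg (hq x) _

def gExp {X : Type*} [Fintype X] (w : (X → ℝ) → ℝ) (n : ℕ) (ν : X → ℝ)
    (q : X → ℝ) : EReal :=
  Ldiv q ν + (↑((1 : ℝ) / n * Real.log (w q)) : EReal)

lemma lambdaN_eq_max {w : (X → ℝ) → ℝ} {n : ℕ} {ν : X → ℝ} {C : Set (X → ℝ)}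
    {q0 : X → ℝ} (hq0 : q0 ∈ C ∩ {q | q ∈ Rn X n ∧ 0 < w q})
    (hmax : ∀ q ∈ C ∩ {q | q ∈ Rn X n ∧ 0 < w q}, gExp w n ν q ≤ gExp w n ν q0) :
    lambdaN w n ν C = gExp w n ν q0 :=
  le_antisymm (iSup₂_le hmax) (le_iSup₂_of_le q0 hq0 le_rfl)

lemma key_exponent (n : ℕ) (hn : 1 ≤ n) (ν q : X → ℝ) (hν0 : ∀ x, 0 ≤ ν x)
    (hq : q ∈ pmfSet X) (w : ℝ) (hw : 0 < w) :
    Ldiv q ν + (↑((1 : ℝ) / n * Real.log w) : EReal)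
      = (↑((1 : ℝ) / n) : EReal) * elog (w * typeProb n ν q) := by
  have hn' : 0 < n := hn
  have hn0 : (0 : ℝ) < n := by exact_mod_cast hn'
  have hcoe_pos : (0 : EReal) < ↑((1 : ℝ) / n) := EReal.coe_pos.mpr (by positivity)
  by_cases hA : ∃ x, ν x ≠ 0 ∧ q x = 0
  · obtain ⟨x0, hνx, hqx⟩ := hA
    have ht : typeProb n ν q = 0 := by
      refine Finset.prod_eq_zero (Finset.mem_univ x0) ?_
      rw [hqx]
      exact Real.zero_rpow (mul_ne_zero (ne_of_gt hn0) hνx)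
    have hL : Ldiv q ν = ⊥ := by
      unfold Ldiv
      rw [← Finset.add_sum_erase _ _ (Finset.mem_univ x0), if_neg hνx, if_pos hqx,
        EReal.bot_add]
    rw [hL, EReal.bot_add, ht, mul_zero, elog_zero'', EReal.mul_bot_of_pos hcoe_pos]
  · push_neg at hA
    have hqpos : ∀ x, ν x ≠ 0 → 0 < q x := fun x hx =>
      lt_of_le_of_ne (hq.1 x) (Ne.symm (hA x hx))
    have hfac : ∀ x, 0 < q x ^ ((n : ℝ) * ν x) := by
      intro x
      by_cases hx : ν x = 0
      · rw [hx, mul_zero, Real.rpow_zero]; exact one_pos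
      · exact Real.rpow_pos_of_pos (hqpos x hx) _
    have htpos : 0 < typeProb n ν q := Finset.prod_pos fun x _ => hfac x
    have hlog : Real.log (typeProb n ν q) = (n : ℝ) * ∑ x, ν x * Real.log (q x) := by
      unfold typeProb
      rw [Real.log_prod fun x _ => ne_of_gt (hfac x), Finset.mul_sum]
      refine Finset.sum_congr rfl fun x _ => ?_
      by_cases hx : ν x = 0
      · simp [hx]
      · rw [Real.log_rpow (hqpos x hx)]; ring
    have hLdiv : Ldiv q ν = ((∑ x, ν x * Real.log (q x) : ℝ) : EReal) := by
      unfold Ldiv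
      rw [ecoe_sum']
      refine Finset.sum_congr rfl fun x _ => ?_
      by_cases hx : ν x = 0
      · simp [hx]
      · rw [if_neg hx, if_neg (hA x hx)]
    rw [hLdiv, elog_of_pos' (mul_pos hw htpos),
      Real.log_mul (ne_of_gt hw) (ne_of_gt htpos), hlog, ← EReal.coe_add,
      ← EReal.coe_mul, EReal.coe_eq_coe_iff]
    field_simp
    ring

lemma Rn_finite' (n : ℕ) (hn : 1 ≤ n) : (Rn X n).Finite ∧
    Nat.card ↥(Rn X n) ≤ (n + 1) ^ Fintype.card X := by
  classical
  have hn' : 0 < n := hn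
  have hn0 : (0 : ℝ) < n := by exact_mod_cast hn'
  let ψ : ↥(Rn X n) → (X → Fin (n + 1)) := fun q x =>
    ⟨(q.2.2 x).choose, by
      have hs := (q.2.2 x).choose_spec
      have h1 : q.1 x ≤ 1 := pmf_le_one' q.2.1 x
      rw [hs, div_le_one hn0] at h1
      have h2 : (q.2.2 x).choose ≤ n := by exact_mod_cast h1
      omega⟩
  have hinj : Function.Injective ψ := by
    intro a b h
    apply Subtype.ext
    funext x
    have ha := (a.2.2 x).choose_spec
    have hb := (b.2.2 x).choose_spec
    have hx : ((a.2.2 x).choose : ℕ) = (b.2.2 x).choose :=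
      congrArg Fin.val (congrFun h x)
    rw [ha, hb, hx]
  have hfin : Finite ↥(Rn X n) := Finite.of_injective ψ hinj
  refine ⟨Set.finite_coe_iff.mp hfin, ?_⟩
  calc Nat.card ↥(Rn X n) ≤ Nat.card (X → Fin (n + 1)) :=
        Nat.card_le_card_of_injective ψ hinj
    _ = (n + 1) ^ Fintype.card X := by
        rw [Nat.card_eq_fintype_card, Fintype.card_fun, Fintype.card_fin]

end AuxSandwich

/-- Finite-n sandwich bound for a general prior on n-sources. -/
theorem finite_n_sandwich_general_prior {X : Type*} [Fintype X] [Nonempty X]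
    (n : ℕ) (hn : 1 ≤ n) (ν : X → ℝ) (hν : ν ∈ Rn X n)
    (w : (X → ℝ) → ℝ)
    (hw01 : ∀ q ∈ Rn X n, 0 ≤ w q ∧ w q ≤ 1)
    (hw1 : (∑' q : ↥(Rn X n), w ↑q) = 1)
    (Q : Set (X → ℝ)) (hQsub : Q ⊆ pmfSet X)
    (hQS : (Q ∩ {q | q ∈ Rn X n ∧ 0 < w q}).Nonempty)
    (hP : ⊥ < lambdaN w n ν (pmfSet X)) :
    (lambdaN w n ν Q - lambdaN w n ν (pmfSet X)
        - (↑((Fintype.card X : ℝ) / n * Real.log (n + 1)) : EReal)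
      ≤ (↑((1 : ℝ) / n) : EReal) * elog (postGen w n ν Q)) ∧
    ((↑((1 : ℝ) / n) : EReal) * elog (postGen w n ν Q)
      ≤ lambdaN w n ν Q - lambdaN w n ν (pmfSet X)
        + (↑((Fintype.card X : ℝ) / n * Real.log (n + 1)) : EReal)) := by
  classical
  have hn' : 0 < n := hn
  have hn0 : (0 : ℝ) < n := by exact_mod_cast hn'
  have hcoe_pos : (0 : EReal) < ↑((1 : ℝ) / n) := EReal.coe_pos.mpr (by positivity)
  have hν0 : ∀ x, 0 ≤ ν x := hν.1.1
  obtain ⟨hfinR, hcardR⟩ := Rn_finite' (X := X) n hn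
  have hfinQR : (Q ∩ Rn X n).Finite := hfinR.subset Set.inter_subset_right
  haveI fR : Fintype ↥(Rn X n) := hfinR.fintype
  haveI fQR : Fintype ↥(Q ∩ Rn X n) := hfinQR.fintype
  -- maxima
  have hQSfin : (Q ∩ {q | q ∈ Rn X n ∧ 0 < w q}).Finite :=
    hfinR.subset fun q hq => hq.2.1
  obtain ⟨qQ, hqQ, hmaxQ⟩ := Set.exists_max_image _ (gExp w n ν) hQSfin hQS
  have hlamQ : lambdaN w n ν Q = gExp w n ν qQ := lambdaN_eq_max hqQ hmaxQ
  have hPSfin : (pmfSet X ∩ {q | q ∈ Rn X n ∧ 0 < w q}).Finite :=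
    hfinR.subset fun q hq => hq.2.1
  have hPSne : (pmfSet X ∩ {q | q ∈ Rn X n ∧ 0 < w q}).Nonempty := by
    obtain ⟨q1, hq1⟩ := hQS
    exact ⟨q1, hq1.2.1.1, hq1.2⟩
  obtain ⟨qP, hqP, hmaxP⟩ := Set.exists_max_image _ (gExp w n ν) hPSfin hPSne
  have hlamP : lambdaN w n ν (pmfSet X) = gExp w n ν qP := lambdaN_eq_max hqP hmaxP
  -- key facts
  have key : ∀ q, q ∈ Rn X n → 0 < w q →
      gExp w n ν q = (↑((1 : ℝ) / n) : EReal) * elog (w q * typeProb n ν q) :=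
    fun q hq hw => key_exponent n hn ν q hν0 hq.1 (w q) hw
  have hFnn : ∀ q, q ∈ Rn X n → 0 ≤ w q * typeProb n ν q :=
    fun q hq => mul_nonneg (hw01 q hq).1 (typeProb_nonneg' n ν q hq.1.1)
  have cmp : ∀ qm q, qm ∈ Rn X n → 0 < w qm → q ∈ Rn X n →
      (0 < w q → gExp w n ν q ≤ gExp w n ν qm) →
      w q * typeProb n ν q ≤ w qm * typeProb n ν qm := by
    intro qm q hqm hwm hq hle
    rcases eq_or_lt_of_le (hw01 q hq).1 with hw0 | hwq
    · rw [← hw0, zero_mul]; exact hFnn qm hqm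
    · have h := hle hwq
      rw [key q hq hwq, key qm hqm hwm] at h
      rcases eq_or_lt_of_le (hFnn q hq) with hF0 | hFpos
      · rw [← hF0]; exact hFnn qm hqm
      · rw [elog_of_pos' hFpos] at h
        rcases eq_or_lt_of_le (hFnn qm hqm) with hFm0 | hFmpos
        · exfalso
          rw [← hFm0, elog_zero'', EReal.mul_bot_of_pos hcoe_pos,
            ← EReal.coe_mul] at h
          exact EReal.coe_ne_bot _ (le_bot_iff.mp h)
        · rw [elog_of_pos' hFmpos, ← EReal.coe_mul, ← EReal.coe_mul,
            EReal.coe_le_coe_iff] at h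
          have hlog := (mul_le_mul_iff_right₀ (by positivity : (0 : ℝ) < 1 / n)).mp h
          exact (Real.log_le_log_iff hFpos hFmpos).mp hlog
  -- positivity at qP
  have hqPR : qP ∈ Rn X n := hqP.2.1
  have hqPw : 0 < w qP := hqP.2.2
  have hFPpos : 0 < w qP * typeProb n ν qP := by
    rcases eq_or_lt_of_le (hFnn qP hqPR) with h0 | hpos
    · exfalso
      have hP' := hP
      rw [hlamP, key qP hqPR hqPw, ← h0, elog_zero'',
        EReal.mul_bot_of_pos hcoe_pos] at hP'
      exact lt_irrefl _ hP'
    · exact hpos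
  have hlamP' : lambdaN w n ν (pmfSet X)
      = (↑((1 : ℝ) / n * Real.log (w qP * typeProb n ν qP)) : EReal) := by
    rw [hlamP, key qP hqPR hqPw, elog_of_pos' hFPpos, ← EReal.coe_mul]
  -- sums
  have hNdef : (∑' q : ↥(Q ∩ Rn X n), w ↑q * typeProb n ν ↑q)
      = ∑ q : ↥(Q ∩ Rn X n), w ↑q * typeProb n ν ↑q := tsum_fintype _
  have hDdef : (∑' q : ↥(Rn X n), w ↑q * typeProb n ν ↑q)
      = ∑ q : ↥(Rn X n), w ↑q * typeProb n ν ↑q := tsum_fintype _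
  set N : ℝ := ∑ q : ↥(Q ∩ Rn X n), w ↑q * typeProb n ν ↑q with hNs
  set D : ℝ := ∑ q : ↥(Rn X n), w ↑q * typeProb n ν ↑q with hDs
  have hpost : postGen w n ν Q = N / D := by
    unfold postGen
    rw [hNdef, hDdef]
  set KQ : ℕ := Fintype.card ↥(Q ∩ Rn X n) with hKQdef
  set KP : ℕ := Fintype.card ↥(Rn X n) with hKPdef
  have hKP : KP ≤ (n + 1) ^ Fintype.card X := by
    rw [hKPdef, ← Nat.card_eq_fintype_card]; exact hcardR
  have hKQP : KQ ≤ KP := by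
    rw [hKQdef, hKPdef, ← Nat.card_eq_fintype_card, ← Nat.card_eq_fintype_card]
    exact Nat.card_le_card_of_injective _
      (Set.inclusion_injective Set.inter_subset_right)
  have hqQmem : qQ ∈ Q ∩ Rn X n := ⟨hqQ.1, hqQ.2.1⟩
  have hqQR : qQ ∈ Rn X n := hqQ.2.1
  have hqQw : 0 < w qQ := hqQ.2.2
  have hKQ1 : 1 ≤ KQ := Fintype.card_pos_iff.mpr ⟨⟨qQ, hqQmem⟩⟩
  have hKP1 : 1 ≤ KP := Fintype.card_pos_iff.mpr ⟨⟨qP, hqPR⟩⟩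
  have hNlow : w qQ * typeProb n ν qQ ≤ N := by
    rw [hNs]
    exact Finset.single_le_sum
      (f := fun q : ↥(Q ∩ Rn X n) => w ↑q * typeProb n ν ↑q)
      (fun i _ => hFnn _ i.2.2) (Finset.mem_univ (⟨qQ, hqQmem⟩ : ↥(Q ∩ Rn X n)))
  have hNup : N ≤ (KQ : ℝ) * (w qQ * typeProb n ν qQ) := by
    rw [hNs]
    calc ∑ q : ↥(Q ∩ Rn X n), w ↑q * typeProb n ν ↑q
        ≤ ∑ _q : ↥(Q ∩ Rn X n), w qQ * typeProb n ν qQ :=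
          Finset.sum_le_sum fun i _ =>
            cmp qQ ↑i hqQR hqQw i.2.2 (fun hwi => hmaxQ ↑i ⟨i.2.1, i.2.2, hwi⟩)
      _ = (KQ : ℝ) * (w qQ * typeProb n ν qQ) := by
          rw [Finset.sum_const, Finset.card_univ, nsmul_eq_mul, hKQdef]
  have hDlow : w qP * typeProb n ν qP ≤ D := by
    rw [hDs]
    exact Finset.single_le_sum
      (f := fun q : ↥(Rn X n) => w ↑q * typeProb n ν ↑q)
      (fun i _ => hFnn _ i.2) (Finset.mem_univ (⟨qP, hqPR⟩ : ↥(Rn X n)))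
  have hDup : D ≤ (KP : ℝ) * (w qP * typeProb n ν qP) := by
    rw [hDs]
    calc ∑ q : ↥(Rn X n), w ↑q * typeProb n ν ↑q
        ≤ ∑ _q : ↥(Rn X n), w qP * typeProb n ν qP :=
          Finset.sum_le_sum fun i _ =>
            cmp qP ↑i hqPR hqPw i.2 (fun hwi => hmaxP ↑i ⟨i.2.1, i.2, hwi⟩)
      _ = (KP : ℝ) * (w qP * typeProb n ν qP) := by
          rw [Finset.sum_const, Finset.card_univ, nsmul_eq_mul, hKPdef]
  have hDpos : 0 < D := lt_of_lt_of_le hFPpos hDlow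
  -- log card bounds
  have hlogKP : Real.log (KP : ℝ) ≤ (Fintype.card X : ℝ) * Real.log ((n : ℝ) + 1) := by
    have h1 : (KP : ℝ) ≤ ((n : ℝ) + 1) ^ Fintype.card X := by
      calc (KP : ℝ) ≤ (((n + 1) ^ Fintype.card X : ℕ) : ℝ) := by exact_mod_cast hKP
        _ = ((n : ℝ) + 1) ^ Fintype.card X := by push_cast; ring
    calc Real.log (KP : ℝ) ≤ Real.log (((n : ℝ) + 1) ^ Fintype.card X) :=
          Real.log_le_log (by exact_mod_cast hKP1) h1
      _ = (Fintype.card X : ℝ) * Real.log ((n : ℝ) + 1) := Real.log_pow _ _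
  have hlogKQ : Real.log (KQ : ℝ) ≤ (Fintype.card X : ℝ) * Real.log ((n : ℝ) + 1) := by
    refine le_trans (Real.log_le_log (by exact_mod_cast hKQ1) (by exact_mod_cast hKQP)) hlogKP
  -- case split on max of numerator
  rcases eq_or_lt_of_le (hFnn qQ hqQR) with hFQ0 | hFQpos
  · -- numerator vanishes
    have hN0 : N = 0 := by
      have h1 : N ≤ 0 := by
        have := hNup; rw [← hFQ0, mul_zero] at this; exact this
      have h2 : 0 ≤ N := by
        rw [hNs]; exact Finset.sum_nonneg fun i _ => hFnn _ i.2.2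
      linarith
    have hlamQbot : lambdaN w n ν Q = ⊥ := by
      rw [hlamQ, key qQ hqQR hqQw, ← hFQ0, elog_zero'',
        EReal.mul_bot_of_pos hcoe_pos]
    constructor
    · rw [hlamQbot, hpost, hN0, zero_div, elog_zero'',
        EReal.mul_bot_of_pos hcoe_pos, EReal.bot_sub, EReal.bot_sub]
    · rw [hlamQbot, hpost, hN0, zero_div, elog_zero'',
        EReal.mul_bot_of_pos hcoe_pos]
      exact bot_le
  · -- numerator positive
    have hlamQ' : lambdaN w n ν Q
        = (↑((1 : ℝ) / n * Real.log (w qQ * typeProb n ν qQ)) : EReal) := by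
      rw [hlamQ, key qQ hqQR hqQw, elog_of_pos' hFQpos, ← EReal.coe_mul]
    have hNpos : 0 < N := lt_of_lt_of_le hFQpos hNlow
    have hpost' : elog (postGen w n ν Q) = (↑(Real.log N - Real.log D) : EReal) := by
      rw [hpost, elog_of_pos' (div_pos hNpos hDpos),
        Real.log_div (ne_of_gt hNpos) (ne_of_gt hDpos)]
    set a : ℝ := Real.log (w qQ * typeProb n ν qQ) with hadef
    set b : ℝ := Real.log (w qP * typeProb n ν qP) with hbdef
    set M : ℝ := (Fintype.card X : ℝ) * Real.log ((n : ℝ) + 1) with hMdef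
    have hLNl : a ≤ Real.log N := Real.log_le_log hFQpos hNlow
    have hLNu : Real.log N ≤ a + M := by
      calc Real.log N ≤ Real.log ((KQ : ℝ) * (w qQ * typeProb n ν qQ)) :=
            Real.log_le_log hNpos hNup
        _ = Real.log (KQ : ℝ) + a := by
            rw [Real.log_mul (by positivity : (KQ : ℝ) ≠ 0) (ne_of_gt hFQpos)]
        _ ≤ a + M := by rw [hMdef]; linarith [hlogKQ]
    have hLDl : b ≤ Real.log D := Real.log_le_log hFPpos hDlow
    have hLDu : Real.log D ≤ b + M := by
      calc Real.log D ≤ Real.log ((KP : ℝ) * (w qP * typeProb n ν qP)) :=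
            Real.log_le_log hDpos hDup
        _ = Real.log (KP : ℝ) + b := by
            rw [Real.log_mul (by positivity : (KP : ℝ) ≠ 0) (ne_of_gt hFPpos)]
        _ ≤ b + M := by rw [hMdef]; linarith [hlogKP]
    constructor
    · rw [hlamQ', hlamP', hpost', ← EReal.coe_mul, ← EReal.coe_sub, ← EReal.coe_sub,
        EReal.coe_le_coe_iff]
      have e1 : (1 : ℝ) / n * a - (1 : ℝ) / n * b
          - (Fintype.card X : ℝ) / n * Real.log ((n : ℝ) + 1)
          = (1 / n) * (a - b - M) := by rw [hMdef]; ring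
      have e2 : (1 : ℝ) / n * (Real.log N - Real.log D)
          = (1 / n) * (Real.log N - Real.log D) := by ring
      rw [e1]
      exact mul_le_mul_of_nonneg_left (by linarith) (by positivity)
    · rw [hlamQ', hlamP', hpost', ← EReal.coe_mul, ← EReal.coe_sub, ← EReal.coe_add,
        EReal.coe_le_coe_iff]
      have e1 : (1 : ℝ) / n * a - (1 : ℝ) / n * b
          + (Fintype.card X : ℝ) / n * Real.log ((n : ℝ) + 1)
          = (1 / n) * (a - b + M) := by rw [hMdef]; ring
      rw [e1]
      exact mul_le_mul_of_nonneg_left (by linarith) (by positivity)
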